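/- arXiv:1707.08243 — 2 statements merged into one kernel-verified Lean document; each statement's English description precedes it below -/
import Mathlib

section
/- Let G be a real n1×k matrix with columns g_1,…,g_k and H a real k×n2 matrix with rows h_1,…,h_k. Then rank(GH) ≤ the maximum cardinality of a jointly independent index set of (G, H) (taken to be 0 if none exists). In particular this gives a tighter upper bound on rank(GH) than min{rank G, rank H}. -/
/-!
With `r = rank (G * H)`, pick a nonsingular `r × r` minor `G_ρ H_τ` of `G * H`. Averaging the
expansion `det (M * N) = ∑ f, det M_{·,f} * ∏ i, N_{f i, i}` over the reindexings `f ↦ f ∘ σ`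
gives the Cauchy–Binet type identity `r! * det (M * N) = ∑ f, det M_{·,f} * det N_{f,·}` over all
`f : Fin r → 𝐤`. Hence some `f` makes both `G_{ρ,f}` and `H_{f,τ}` nonsingular, so the columns
`g_{f i}` and the rows `h_{f i}` are independent, and the image of `f` is a jointly independent set
of size `r`. The bound by `min (rank G) (rank H)` holds because a jointly independent set indexes
independent columns of `G` and independent rows of `H`.
-/

open Matrix BigOperators

namespace StructCtrl

/-- A general linearly parameterized `n1 × n2` matrix `M(p) = ∑ k, p k • (g k * h k)`,
with columns `g k` and rows `h k`. -/
noncomputable def paramMat {q n1 n2 : ℕ} (g : Fin q → Fin n1 → ℝ) (h : Fin q → Fin n2 → ℝ)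
    (p : Fin q → ℝ) : Matrix (Fin n1) (Fin n2) ℝ :=
  Matrix.of fun i j => ∑ k : Fin q, p k * (g k i * h k j)

/-- Generic rank: the maximum over `p ∈ ℝ^q` of the rank of `M(p)`. -/
noncomputable def genericRank {q n1 n2 : ℕ} (g : Fin q → Fin n1 → ℝ)
    (h : Fin q → Fin n2 → ℝ) : ℕ :=
  ⨆ p : Fin q → ℝ, (paramMat g h p).rank

/-- `A(p)`: the `n × n` matrix of the first `n` columns of `[A(p) B(p)]`. -/
noncomputable def Amat {n m q : ℕ} (g : Fin q → Fin n → ℝ) (h : Fin q → Fin (n + m) → ℝ)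
    (p : Fin q → ℝ) : Matrix (Fin n) (Fin n) ℝ :=
  Matrix.of fun i j => paramMat g h p i (Fin.castAdd m j)

/-- `B(p)`: the `n × m` matrix of the last `m` columns of `[A(p) B(p)]`. -/
noncomputable def Bmat {n m q : ℕ} (g : Fin q → Fin n → ℝ) (h : Fin q → Fin (n + m) → ℝ)
    (p : Fin q → ℝ) : Matrix (Fin n) (Fin m) ℝ :=
  Matrix.of fun i j => paramMat g h p i (Fin.natAdd n j)

/-- Controllability matrix `[B  AB  …  A^{n-1}B]` (columns indexed by `Fin n × Fin m`). -/
noncomputable def ctrbMat {n m : ℕ} (A : Matrix (Fin n) (Fin n) ℝ)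
    (B : Matrix (Fin n) (Fin m) ℝ) : Matrix (Fin n) (Fin n × Fin m) ℝ :=
  Matrix.of fun i kj => (A ^ (kj.1 : ℕ) * B) i kj.2

/-- `(A, B)` is structurally controllable: for some parameter value the controllability
matrix has full rank `n`. -/
def StructurallyControllable {n m q : ℕ} (g : Fin q → Fin n → ℝ)
    (h : Fin q → Fin (n + m) → ℝ) : Prop :=
  ∃ p : Fin q → ℝ, (ctrbMat (Amat g h p) (Bmat g h p)).rank = n

/-- The binary assumption: all entries of every `g k` and every `h k` are `0` or `1`. -/
def BinaryAssumption {n m q : ℕ} (g : Fin q → Fin n → ℝ)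
    (h : Fin q → Fin (n + m) → ℝ) : Prop :=
  (∀ k i, g k i = 0 ∨ g k i = 1) ∧ (∀ k j, h k j = 0 ∨ h k j = 1)

/-- The unitary assumption: every `g k` and every `h k` is a standard unit vector, and the
pairs `(g k, h k)` are pairwise distinct. -/
def UnitaryAssumption {n m q : ℕ} (g : Fin q → Fin n → ℝ)
    (h : Fin q → Fin (n + m) → ℝ) : Prop :=
  (∀ k, ∃ i : Fin n, g k = Pi.single i 1) ∧
  (∀ k, ∃ j : Fin (n + m), h k = Pi.single j 1) ∧
  (∀ k k', k ≠ k' → (g k, h k) ≠ (g k', h k'))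

/-- `(A, B)` is reducible: some simultaneous permutation of the states puts the pair,
for all parameter values, in block-triangular form with a zero top-right `n1 × (n - n1)`
block of `A` and a zero top `n1 × m` block of `B`, where `1 ≤ n1 < n`. -/
def Reducible {n m q : ℕ} (g : Fin q → Fin n → ℝ) (h : Fin q → Fin (n + m) → ℝ) : Prop :=
  ∃ (σ : Equiv.Perm (Fin n)) (n1 : ℕ), 1 ≤ n1 ∧ n1 < n ∧ ∀ p : Fin q → ℝ,
    (∀ i j : Fin n, (i : ℕ) < n1 → n1 ≤ (j : ℕ) → Amat g h p (σ i) (σ j) = 0) ∧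
    (∀ i : Fin n, (i : ℕ) < n1 → ∀ jb : Fin m, Bmat g h p (σ i) jb = 0)

/-- `(A, B)` is irreducible. -/
def PairIrreducible {n m q : ℕ} (g : Fin q → Fin n → ℝ)
    (h : Fin q → Fin (n + m) → ℝ) : Prop :=
  ¬ Reducible g h

/-- Arc (of any color) of the graph `𝔾` of `(A, B)` from vertex `a` to vertex `b`:
`b` is a row-vertex `i` (one of the first `n` vertices) and the `(i, a)` entry of some
`g k * h k` is nonzero. -/
def HasArc {n m q : ℕ} (g : Fin q → Fin n → ℝ) (h : Fin q → Fin (n + m) → ℝ)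
    (a b : Fin (n + m)) : Prop :=
  ∃ (k : Fin q) (i : Fin n), b = Fin.castAdd m i ∧ g k i * h k a ≠ 0

/-- `𝔾` has a spanning forest rooted at the `m` input vertices `n+1, …, n+m`: every other
vertex is reachable from some input vertex by a directed path. -/
def HasSpanningForestAtInputs {n m q : ℕ} (g : Fin q → Fin n → ℝ)
    (h : Fin q → Fin (n + m) → ℝ) : Prop :=
  ∀ v : Fin (n + m), (¬ ∃ j : Fin m, Fin.natAdd n j = v) →
    ∃ j : Fin m, Relation.ReflTransGen (HasArc g h) (Fin.natAdd n j) v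

/-- A multi-colored subgraph of `𝔾`, encoded by the data of its `n` arcs: each of the
vertices `1, …, n` is the head of exactly one arc, with tail `t i` and color `c i`.
Injectivity of `t` and of `c` says no two arcs share a start vertex or a color (no two
share an end vertex by construction); such a spanning subgraph is exactly a disjoint union
of `m` directed path graphs (whose sources are the `m` input vertices) and directed cycle
graphs, with all arc colors distinct. -/
def IsMCS {n m q : ℕ} (g : Fin q → Fin n → ℝ) (h : Fin q → Fin (n + m) → ℝ)
    (t : Fin n → Fin (n + m)) (c : Fin n → Fin q) : Prop :=
  Function.Injective t ∧ Function.Injective c ∧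
    ∀ i : Fin n, g (c i) i * h (c i) (t i) ≠ 0

/-- A pure sink of the multi-colored subgraph with tail map `t`: a sink that is not a
source (i.e. has no outgoing arc, and is one of the first `n` vertices). -/
def IsPureSink {n m : ℕ} (t : Fin n → Fin (n + m)) (v : Fin (n + m)) : Prop :=
  (¬ ∃ i : Fin n, t i = v) ∧ ∃ i : Fin n, Fin.castAdd m i = v

/-- A pure source: a source (one of the last `m` vertices) that is not a sink. -/
def IsPureSource {n m : ℕ} (t : Fin n → Fin (n + m)) (v : Fin (n + m)) : Prop :=
  (∃ i : Fin n, t i = v) ∧ ∃ j : Fin m, Fin.natAdd n j = v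

/-- A matrimonial partition, encoded by a permutation `μ` that matches each pure sink with
a distinct pure source (the two-element cells are the pairs `{v, μ v}` for `v` a pure sink;
all other vertices lie in singleton cells). -/
def IsMatrimonial {n m : ℕ} (t : Fin n → Fin (n + m)) (μ : Equiv.Perm (Fin (n + m))) : Prop :=
  ∀ v, IsPureSink t v ↔ IsPureSource t (μ v)

/-- The successor map of the quotient of a multi-colored subgraph by a matrimonial
partition: each vertex with an outgoing arc is sent to the head of that arc, each pure
sink is welded to (sent to) its paired pure source, and isolated vertices stay put. -/
noncomputable def weldMap {n m : ℕ} (t : Fin n → Fin (n + m))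
    (μ : Equiv.Perm (Fin (n + m))) (v : Fin (n + m)) : Fin (n + m) :=
  if hv : ∃ i : Fin n, t i = v then Fin.castAdd m hv.choose
  else if ∃ i : Fin n, Fin.castAdd m i = v then μ v else v

/-- Number of orbits of a self-map of `Fin N`. -/
noncomputable def orbitCount {N : ℕ} (f : Fin N → Fin N) : ℕ :=
  (Set.range fun v => {w | ∃ a b : ℕ, f^[a] v = f^[b] w}).ncard

/-- Number of isolated vertices of a multi-colored subgraph (vertices that are both a
source and a sink). -/
noncomputable def isolatedCount {n m : ℕ} (t : Fin n → Fin (n + m)) : ℕ :=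
  {v : Fin (n + m) | (¬ ∃ i : Fin n, t i = v) ∧ ∃ j : Fin m, Fin.natAdd n j = v}.ncard

/-- The number of directed cycle graphs in the quotient of a multi-colored subgraph by a
matrimonial partition: every orbit of the weld map, except the (singleton) orbits of the
isolated vertices, yields exactly one cycle graph of the quotient. -/
noncomputable def quotCycleCount {n m : ℕ} (t : Fin n → Fin (n + m))
    (μ : Equiv.Perm (Fin (n + m))) : ℕ :=
  orbitCount (weldMap t μ) - isolatedCount t

/-- `𝔾` has an unbalanced similarity class of multi-colored subgraphs: for some
multi-colored subgraph `(t, c)` and some matrimonial partition `μ` for its class, the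
numbers of odd and of even multi-colored subgraphs in its similarity class (same sink set,
i.e. same `Set.range t`, and same color set `Set.range c`) differ. -/
def HasUnbalancedClass {n m q : ℕ} (g : Fin q → Fin n → ℝ)
    (h : Fin q → Fin (n + m) → ℝ) : Prop :=
  ∃ (t : Fin n → Fin (n + m)) (c : Fin n → Fin q) (μ : Equiv.Perm (Fin (n + m))),
    IsMCS g h t c ∧ IsMatrimonial t μ ∧
    {tc : (Fin n → Fin (n + m)) × (Fin n → Fin q) |
        IsMCS g h tc.1 tc.2 ∧ Set.range tc.1 = Set.range t ∧
        Set.range tc.2 = Set.range c ∧ Odd (quotCycleCount tc.1 μ)}.ncard ≠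
      {tc : (Fin n → Fin (n + m)) × (Fin n → Fin q) |
        IsMCS g h tc.1 tc.2 ∧ Set.range tc.1 = Set.range t ∧
        Set.range tc.2 = Set.range c ∧ Even (quotCycleCount tc.1 μ)}.ncard

/-- Arc set of the directed path graph whose vertices, in order, are the list `l`. -/
def pathArcs {V : Type*} (l : List V) : Set (V × V) :=
  {a | ∃ k : ℕ, l[k]? = some a.1 ∧ l[k + 1]? = some a.2}

/-- Arc set of the directed cycle graph whose vertices, in cyclic order, are the list `l`. -/
def cycleArcs {V : Type*} (l : List V) : Set (V × V) :=
  pathArcs l ∪ {a | ∃ x y, l.getLast? = some x ∧ l.head? = some y ∧ a = (x, y)}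

/-- A cactus graph with vertex set `W`, arc set `E` and root `r`: a trunk (a directed path
graph, possibly a single vertex, starting at `r`) together with any number of buds, each
bud being a directed cycle graph together with a stem arc from a vertex already in the
graph (on the trunk or on the cycle of another bud) to a vertex of the cycle. -/
inductive IsCactus {V : Type*} : Set V → Set (V × V) → V → Prop where
  | trunk (r : V) (l : List V) (hnd : l.Nodup) (hhead : l.head? = some r) :
      IsCactus {v | v ∈ l} (pathArcs l) r
  | bud (r : V) (W : Set V) (E : Set (V × V)) (l : List V) (w u : V)
      (hc : IsCactus W E r) (hnd : l.Nodup) (hne : l ≠ [])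
      (hdisj : ∀ v ∈ l, v ∉ W) (hw : w ∈ W) (hu : u ∈ l) :
      IsCactus (W ∪ {v | v ∈ l}) (E ∪ cycleArcs l ∪ {(w, u)}) r

/-- `𝔾` has a spanning subgraph which is a disjoint union of `m` cactus graphs rooted at
the `m` input vertices `n+1, …, n+m`, respectively. -/
def HasSpanningCacti {n m q : ℕ} (g : Fin q → Fin n → ℝ)
    (h : Fin q → Fin (n + m) → ℝ) : Prop :=
  ∃ (W : Fin m → Set (Fin (n + m))) (F : Fin m → Set (Fin (n + m) × Fin (n + m))),
    (∀ j, IsCactus (W j) (F j) (Fin.natAdd n j)) ∧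
    (∀ j, ∀ a ∈ F j, HasArc g h a.1 a.2) ∧
    Pairwise (fun j j' => Disjoint (W j) (W j')) ∧
    (⋃ j, W j) = Set.univ

/-- Rank of the submatrix `G_S` whose columns are the `g i`, `i ∈ S`. -/
noncomputable def rankCols {q n1 : ℕ} (g : Fin q → Fin n1 → ℝ) (S : Finset (Fin q)) : ℕ :=
  (Matrix.of fun (i : Fin n1) (k : {x // x ∈ S}) => g k.1 i).rank

/-- Rank of the submatrix `H_S` whose rows are the `h i`, `i ∈ S`. -/
noncomputable def rankRows {q n2 : ℕ} (h : Fin q → Fin n2 → ℝ) (S : Finset (Fin q)) : ℕ :=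
  (Matrix.of fun (k : {x // x ∈ S}) (j : Fin n2) => h k.1 j).rank

/-- `I` is a jointly independent index set of `(G, H)`: both `{g i : i ∈ I}` and
`{h i : i ∈ I}` are linearly independent families. -/
def JointlyIndependent {q n1 n2 : ℕ} (g : Fin q → Fin n1 → ℝ) (h : Fin q → Fin n2 → ℝ)
    (I : Finset (Fin q)) : Prop :=
  LinearIndependent ℝ (fun i : {x // x ∈ I} => g i.1) ∧
  LinearIndependent ℝ (fun i : {x // x ∈ I} => h i.1)

/-- Maximum cardinality of a nonempty jointly independent index set of `(G, H)`,
taken to be `0` if none exists. -/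
noncomputable def maxJointIndep {q n1 n2 : ℕ} (g : Fin q → Fin n1 → ℝ)
    (h : Fin q → Fin n2 → ℝ) : ℕ :=
  sSup (insert 0 {c : ℕ | ∃ I : Finset (Fin q), I.Nonempty ∧
    JointlyIndependent g h I ∧ I.card = c})

/-- Arcs of the transfer graph of `{G_𝐪, H_𝐪}`; vertex `0` is `none`, vertex `i ∈ 𝐪`
is `some i`.  There is an arc from `0` to `i` iff `h_{i2} ≠ 0`, and an arc from `j` to `i`
iff the scalar `h_{i1} g_j` is nonzero. -/
def TArc {n m q : ℕ} (g : Fin q → Fin n → ℝ) (h : Fin q → Fin (n + m) → ℝ) :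
    Option (Fin q) → Option (Fin q) → Prop
  | none, some i => ∃ j : Fin m, h i (Fin.natAdd n j) ≠ 0
  | some j, some i => (∑ l : Fin n, h i (Fin.castAdd m l) * g j l) ≠ 0
  | _, none => False

/-- The transfer graph has a spanning tree rooted at vertex `0`: every vertex `1, …, q`
is reachable from vertex `0` by a directed path. -/
def TransferRootedAtZero {n m q : ℕ} (g : Fin q → Fin n → ℝ)
    (h : Fin q → Fin (n + m) → ℝ) : Prop :=
  ∀ i : Fin q, Relation.ReflTransGen (TArc g h) none (some i)

end StructCtrl

namespace Matrix

variable {ι m n R K : Type*}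

section CauchyBinet

variable [Fintype m] [DecidableEq m] [Fintype n] [CommRing R]

theorem det_mul_eq_sum_det_submatrix_mul_prod (M : Matrix m n R) (N : Matrix n m R) :
    (M * N).det = ∑ f : m → n, (M.submatrix id f).det * ∏ i, N (f i) i := by
  simp only [det_apply', mul_apply, Finset.prod_univ_sum, Fintype.piFinset_univ,
    Finset.mul_sum, Finset.sum_mul, submatrix_apply, id, Finset.prod_mul_distrib]
  rw [Finset.sum_comm]
  simp only [mul_assoc]

theorem factorial_card_mul_det_mul_eq_sum_det_mul_det (M : Matrix m n R) (N : Matrix n m R) :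
    ((Fintype.card m).factorial : R) * (M * N).det =
      ∑ f : m → n, (M.submatrix id f).det * (N.submatrix f id).det := by
  have reindexed (σ : Equiv.Perm m) : (M * N).det =
      ∑ f : m → n, (M.submatrix id f).det * (((Equiv.Perm.sign σ : ℤ) : R) * ∏ i, N (f (σ i)) i) := by
    rw [det_mul_eq_sum_det_submatrix_mul_prod,
      ← Fintype.sum_equiv (σ.symm.arrowCongr (Equiv.refl n))
        (fun f => (M.submatrix id (f ∘ σ)).det * ∏ i, N (f (σ i)) i) _ fun _ => rfl]
    refine Finset.sum_congr rfl fun f _ => ?_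
    rw [show M.submatrix id (f ∘ σ) = (M.submatrix id f).submatrix id σ from rfl, det_permute']
    ring
  calc ((Fintype.card m).factorial : R) * (M * N).det
      = ∑ σ : Equiv.Perm m, (M * N).det := by simp [Fintype.card_perm]
    _ = ∑ f : m → n, (M.submatrix id f).det * (N.submatrix f id).det := by
      rw [Finset.sum_congr rfl fun σ _ => reindexed σ, Finset.sum_comm]
      simp only [det_apply' (N.submatrix _ id), submatrix_apply, id, Finset.mul_sum]

theorem exists_det_submatrix_ne_zero_of_det_mul_ne_zero [IsDomain R] [CharZero R]
    {M : Matrix m n R} {N : Matrix n m R} (h : (M * N).det ≠ 0) :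
    ∃ f : m → n, (M.submatrix id f).det ≠ 0 ∧ (N.submatrix f id).det ≠ 0 := by
  have hsum := mul_ne_zero (Nat.cast_ne_zero.mpr (Fintype.card m).factorial_ne_zero) h
  rw [factorial_card_mul_det_mul_eq_sum_det_mul_det] at hsum
  obtain ⟨f, -, hf⟩ := Finset.exists_ne_zero_of_sum_ne_zero hsum
  exact ⟨f, left_ne_zero_of_mul hf, right_ne_zero_of_mul hf⟩

end CauchyBinet

theorem linearIndependent_rows_of_det_submatrix_ne_zero [Fintype ι] [DecidableEq ι]
    [CommRing R] [IsDomain R] {A : Matrix m n R} {ρ : ι → m} {τ : ι → n}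
    (h : (A.submatrix ρ τ).det ≠ 0) : LinearIndependent R fun i => A (ρ i) :=
  (linearIndependent_rows_of_det_ne_zero h).of_comp (LinearMap.funLeft R R τ)

theorem linearIndependent_cols_of_det_submatrix_ne_zero [Fintype ι] [DecidableEq ι]
    [CommRing R] [IsDomain R] {A : Matrix m n R} {ρ : ι → m} {τ : ι → n}
    (h : (A.submatrix ρ τ).det ≠ 0) : LinearIndependent R fun i => Aᵀ (τ i) :=
  linearIndependent_rows_of_det_submatrix_ne_zero (A := Aᵀ) (ρ := τ) (τ := ρ)
    (by rwa [← transpose_submatrix, det_transpose])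

section Field

variable [Field K] [Fintype n]

theorem card_le_rank_of_linearIndependent_rows [Fintype ι] (A : Matrix m n K) {ρ : ι → m}
    (h : LinearIndependent K fun i => A (ρ i)) : Fintype.card ι ≤ A.rank :=
  (h.rank_matrix (M := A.submatrix ρ id)).ge.trans (rank_submatrix_le A ρ id)

theorem exists_linearIndependent_rows_of_rank_eq [Finite m] (A : Matrix m n K) {r : ℕ}
    (hr : A.rank = r) : ∃ ρ : Fin r → m, LinearIndependent K fun i => A (ρ i) := by
  obtain ⟨κ, a, ha, hspan, hli⟩ := exists_linearIndependent' K A.row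
  have : Finite κ := .of_injective a ha
  have := Fintype.ofFinite κ
  have hcard : Fintype.card κ = r := by
    rw [← hr, rank_eq_finrank_span_row, ← hspan, finrank_span_eq_card hli]
  exact ⟨a ∘ (Fintype.equivFinOfCardEq hcard).symm, hli.comp _ (Equiv.injective _)⟩

theorem exists_det_submatrix_ne_zero_of_rank_eq [Fintype m] (A : Matrix m n K) {r : ℕ}
    (hr : A.rank = r) : ∃ (ρ : Fin r → m) (τ : Fin r → n), (A.submatrix ρ τ).det ≠ 0 := by
  obtain ⟨ρ, hρ⟩ := exists_linearIndependent_rows_of_rank_eq A hr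
  have hrank : (A.submatrix ρ id)ᵀ.rank = r := by
    rw [rank_transpose, hρ.rank_matrix (M := A.submatrix ρ id), Fintype.card_fin]
  obtain ⟨τ, hτ⟩ := exists_linearIndependent_rows_of_rank_eq _ hrank
  refine ⟨ρ, τ, ?_⟩
  rw [← det_transpose]
  exact ((isUnit_iff_isUnit_det _).mp (linearIndependent_rows_iff_isUnit.mp hτ)).ne_zero

end Field

end Matrix

namespace StructCtrl

variable {q n1 n2 : ℕ} {g : Fin q → Fin n1 → ℝ} {h : Fin q → Fin n2 → ℝ}

theorem card_le_maxJointIndep {I : Finset (Fin q)} (hI : JointlyIndependent g h I) :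
    I.card ≤ maxJointIndep g h := by
  obtain rfl | hne := I.eq_empty_or_nonempty
  · exact Nat.zero_le _
  refine le_csSup ⟨q, ?_⟩ (Set.mem_insert_of_mem _ ⟨I, hne, hI, rfl⟩)
  rintro _ (rfl | ⟨J, -, -, rfl⟩)
  · exact Nat.zero_le _
  · simpa using J.card_le_univ

theorem maxJointIndep_le {c : ℕ} (hc : ∀ I, JointlyIndependent g h I → I.card ≤ c) :
    maxJointIndep g h ≤ c := by
  refine csSup_le (Set.insert_nonempty _ _) ?_
  rintro _ (rfl | ⟨I, -, hI, rfl⟩)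
  exacts [Nat.zero_le _, hc I hI]

theorem card_le_maxJointIndep_of_linearIndependent {ι : Type*} [Fintype ι] {f : ι → Fin q}
    (hg : LinearIndependent ℝ (g ∘ f)) (hh : LinearIndependent ℝ (h ∘ f)) :
    Fintype.card ι ≤ maxJointIndep g h := by
  classical
  have hf : Function.Injective f := hg.injective.of_comp
  have hrange : ((Finset.univ.image f : Finset (Fin q)) : Set (Fin q)) = Set.range f := by simp
  have hI : JointlyIndependent g h (Finset.univ.image f) := by
    constructor
    · change LinearIndepOn ℝ g _
      rw [hrange]
      exact (linearIndepOn_range_iff hf g).mpr hg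
    · change LinearIndepOn ℝ h _
      rw [hrange]
      exact (linearIndepOn_range_iff hf h).mpr hh
  simpa [Finset.card_image_of_injective _ hf] using card_le_maxJointIndep hI

theorem stmt8_general (n1 n2 k : ℕ)
    (G : Matrix (Fin n1) (Fin k) ℝ) (H : Matrix (Fin k) (Fin n2) ℝ) :
    (G * H).rank ≤ maxJointIndep (fun i r => G r i) (fun i => H i) ∧
      maxJointIndep (fun i r => G r i) (fun i => H i) ≤ min G.rank H.rank := by
  constructor
  · obtain ⟨ρ, τ, hdet⟩ := (G * H).exists_det_submatrix_ne_zero_of_rank_eq rfl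
    rw [submatrix_mul G H ρ id τ Function.bijective_id] at hdet
    obtain ⟨f, hG, hH⟩ := exists_det_submatrix_ne_zero_of_det_mul_ne_zero hdet
    exact (Fintype.card_fin _).ge.trans <| card_le_maxJointIndep_of_linearIndependent
      (linearIndependent_cols_of_det_submatrix_ne_zero (A := G) hG)
      (linearIndependent_rows_of_det_submatrix_ne_zero (A := H) hH)
  · refine maxJointIndep_le fun I ⟨hg, hh⟩ => le_min ?_ ?_
    · simpa [rank_transpose] using card_le_rank_of_linearIndependent_rows Gᵀ hg
    · simpa using card_le_rank_of_linearIndependent_rows H hh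

/-- `rank (G * H)` is at most the maximum cardinality of a jointly
independent index set of `(G, H)`, and this bound is tighter than
`min {rank G, rank H}`. -/
theorem stmt8 (n1 n2 k : ℕ) (h1 : 1 ≤ n1) (h2 : 1 ≤ n2) (hk : 1 ≤ k)
    (G : Matrix (Fin n1) (Fin k) ℝ) (H : Matrix (Fin k) (Fin n2) ℝ) :
    (G * H).rank ≤ maxJointIndep (fun i r => G r i) (fun i => H i) ∧
      maxJointIndep (fun i r => G r i) (fun i => H i) ≤ min G.rank H.rank :=
  stmt8_general n1 n2 k G H

end StructCtrl
end

section
/- Let 𝔾 be a directed graph on n+m vertices and let R be a set of m distinct vertices. Then 𝔾 has a spanning subgraph which is a disjoint union of m cactus graphs rooted at the m vertices of R if and only if 𝔾 has a spanning forest rooted at the vertices of R and 𝔾 has a spanning subgraph which is a disjoint union of m directed path graphs and a non-negative number of directed cycle graphs, in which the m source vertices of the path graphs are exactly the vertices of R. -/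
open Matrix BigOperators

namespace StructCtrl

/-!
A cactus with its stems deleted is a path from the root together with disjoint cycles, so every
vertex other than the root has an in-arc there and no vertex has two out-arcs: picking these
in-arcs in all the cacti gives the injective choice `t`, and paths inside the cacti give the
forest.

Conversely, `t` has a partial inverse `next`. Walking along `next` from the `m` roots gives `m`
disjoint trunks, and on the remaining vertices `t` is an injective, hence bijective, self-map,
so they fall into cycles of `next`. While some vertex is uncovered, a path to it from a root
leaves the covered set through an arc `(w, u)`; this arc is a stem attaching the whole cycle
through `u` as a bud to the cactus containing `w`.
-/

open Set Function Relation

lemma _root_.Relation.ReflTransGen.exists_leaving {α : Type*} {R : α → α → Prop} {U : Set α}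
    {x y : α} (h : ReflTransGen R x y) (hx : x ∈ U) (hy : y ∉ U) :
    ∃ a b, a ∈ U ∧ b ∉ U ∧ R a b := by
  induction h with
  | refl => exact absurd hx hy
  | @tail b c _ hbc ih =>
    by_cases hb : b ∈ U
    · exact ⟨b, c, hb, hy, hbc⟩
    · exact ih hb

section Periodic

variable {α : Type*} {f : α → α} {x : α}

lemma _root_.Set.MapsTo.mem_of_iterate_mem {U : Set α} {k : ℕ} (hU : MapsTo f U U)
    (hx : x ∈ periodicPts f) (hk : f^[k] x ∈ U) : x ∈ U := by
  obtain ⟨p, hp, hpx⟩ := hx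
  have hle : k ≤ p * k := Nat.le_mul_of_pos_left k hp
  have := hU.iterate (p * k - k) hk
  rwa [← iterate_add_apply, Nat.sub_add_cancel hle, (hpx.mul_const k).eq] at this

lemma mem_iterate_minimalPeriod_iff {y : α} (hx : x ∈ periodicPts f) :
    y ∈ List.iterate f x (minimalPeriod f x) ↔ ∃ n, f^[n] x = y := by
  rw [← mem_periodicOrbit_iff hx, periodicOrbit_def, List.range_map_iterate, Cycle.mem_coe_iff]

lemma nodup_iterate_minimalPeriod (f : α → α) (x : α) :
    (List.iterate f x (minimalPeriod f x)).Nodup := by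
  rw [← Cycle.nodup_coe_iff, ← List.range_map_iterate, ← periodicOrbit_def]
  exact nodup_periodicOrbit

lemma mem_periodicPts_of_mapsTo_of_injOn [Finite α] {s : Set α} (hm : MapsTo f s s)
    (hi : InjOn f s) (hx : x ∈ s) : x ∈ periodicPts f :=
  Semiconj.mapsTo_periodicPts (g := Subtype.val) (fun _ => rfl)
    ((hm.restrict_inj.2 hi).mem_periodicPts ⟨x, hx⟩)

end Periodic

section UpdateUnion

variable {α ι : Type*} [DecidableEq ι] {W : ι → Set α} {O : Set α}

lemma iUnion_update_union (j₀ : ι) :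
    ⋃ j, update W j₀ (W j₀ ∪ O) j = (⋃ j, W j) ∪ O := by
  ext x
  simp only [mem_iUnion, mem_union, update_apply]
  constructor
  · rintro ⟨j, hj⟩
    split_ifs at hj with h
    · exact hj.imp_left fun hx => ⟨j₀, hx⟩
    · exact Or.inl ⟨j, hj⟩
  · rintro (⟨j, hj⟩ | hx)
    · exact ⟨j, by split_ifs with h <;> [exact Or.inl (h ▸ hj); exact hj]⟩
    · exact ⟨j₀, by simp [hx]⟩

lemma pairwise_disjoint_update_union (h : Pairwise fun j j' => Disjoint (W j) (W j'))
    (hO : ∀ j, Disjoint (W j) O) (j₀ : ι) :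
    Pairwise fun j j' =>
      Disjoint (update W j₀ (W j₀ ∪ O) j) (update W j₀ (W j₀ ∪ O) j') := by
  intro j j' hjj'
  simp only [update_apply]
  split_ifs with hj hj' hj'
  · exact absurd (hj.trans hj'.symm) hjj'
  · exact disjoint_union_left.2 ⟨hj ▸ h hjj', (hO j').symm⟩
  · exact disjoint_union_right.2 ⟨hj' ▸ h hjj', hO j⟩
  · exact h hjj'

end UpdateUnion

section ArcLists

variable {V : Type*} {l : List V}

lemma mem_pathArcs_iff {a b : V} :
    (a, b) ∈ pathArcs l ↔ ∃ (i : ℕ) (h : i + 1 < l.length), l[i] = a ∧ l[i + 1] = b := by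
  simp only [pathArcs, mem_ofPred_eq, List.getElem?_eq_some_iff]
  exact ⟨fun ⟨i, ⟨_, ha⟩, ⟨hi, hb⟩⟩ => ⟨i, hi, ha, hb⟩,
    fun ⟨i, hi, ha, hb⟩ => ⟨i, ⟨by omega, ha⟩, ⟨hi, hb⟩⟩⟩

lemma fst_mem_of_mem_pathArcs {a b : V} (h : (a, b) ∈ pathArcs l) : a ∈ l :=
  let ⟨_, h, _⟩ := h
  List.mem_of_getElem? h

lemma fst_mem_of_mem_cycleArcs {a b : V} (h : (a, b) ∈ cycleArcs l) : a ∈ l := by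
  rcases h with h | ⟨x, y, hx, -, h⟩
  · exact fst_mem_of_mem_pathArcs h
  · cases h
    exact List.mem_of_getLast? hx

lemma exists_mem_pathArcs_of_ne_head {v : V} (hv : v ∈ l) (hne : l.head? ≠ some v) :
    ∃ u, (u, v) ∈ pathArcs l := by
  obtain ⟨k, hk, rfl⟩ := List.getElem_of_mem hv
  cases k with
  | zero => exact absurd (by rw [List.head?_eq_getElem?, List.getElem?_eq_getElem hk]) hne
  | succ k => exact ⟨l[k], mem_pathArcs_iff.2 ⟨k, hk, rfl, rfl⟩⟩

lemma exists_mem_cycleArcs {v : V} (hv : v ∈ l) : ∃ u, (u, v) ∈ cycleArcs l := by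
  by_cases hhead : l.head? = some v
  · have hne : l ≠ [] := List.ne_nil_of_mem hv
    exact ⟨l.getLast hne, Or.inr ⟨_, v, List.getLast?_eq_some_getLast hne, hhead, rfl⟩⟩
  · obtain ⟨u, hu⟩ := exists_mem_pathArcs_of_ne_head hv hhead
    exact ⟨u, Or.inl hu⟩

lemma List.Nodup.eq_of_mem_pathArcs (hl : l.Nodup) {u v v' : V}
    (h : (u, v) ∈ pathArcs l) (h' : (u, v') ∈ pathArcs l) : v = v' := by
  obtain ⟨i, hi, rfl, rfl⟩ := mem_pathArcs_iff.1 h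
  obtain ⟨i', hi', hu, rfl⟩ := mem_pathArcs_iff.1 h'
  obtain rfl : i' = i := hl.getElem_inj_iff.1 hu
  rfl

lemma List.Nodup.getLast?_ne_of_mem_pathArcs (hl : l.Nodup) {u v : V}
    (h : (u, v) ∈ pathArcs l) : l.getLast? ≠ some u := by
  obtain ⟨i, hi, rfl, rfl⟩ := mem_pathArcs_iff.1 h
  rw [List.getLast?_eq_getElem?, List.getElem?_eq_getElem (by omega)]
  intro heq
  have := hl.getElem_inj_iff.1 (Option.some_inj.1 heq)
  omega

lemma List.Nodup.eq_of_mem_cycleArcs (hl : l.Nodup) {u v v' : V}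
    (h : (u, v) ∈ cycleArcs l) (h' : (u, v') ∈ cycleArcs l) : v = v' := by
  rcases h with h | ⟨x, y, hx, hy, hxy⟩ <;> rcases h' with h' | ⟨x', y', hx', hy', hxy'⟩
  · exact List.Nodup.eq_of_mem_pathArcs hl h h'
  · cases hxy'; exact absurd hx' (List.Nodup.getLast?_ne_of_mem_pathArcs hl h)
  · cases hxy; exact absurd hx (List.Nodup.getLast?_ne_of_mem_pathArcs hl h')
  · cases hxy; cases hxy'; exact Option.some_inj.1 (hy.symm.trans hy')

lemma reflTransGen_mem_mono {S S' : Set (V × V)} (h : S ⊆ S') {x y : V}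
    (hxy : ReflTransGen (fun a b => (a, b) ∈ S) x y) :
    ReflTransGen (fun a b => (a, b) ∈ S') x y :=
  ReflTransGen.mono (fun _ _ hab => h hab) _ _ hxy

lemma reflTransGen_pathArcs {i k : ℕ} (hik : i ≤ k) (hk : k < l.length) :
    ReflTransGen (fun a b => (a, b) ∈ pathArcs l) l[i] l[k] := by
  induction k, hik using Nat.le_induction with
  | base => rfl
  | succ k _ ih => exact (ih (by omega)).tail (mem_pathArcs_iff.2 ⟨k, hk, rfl, rfl⟩)

lemma reflTransGen_cycleArcs {u v : V} (hu : u ∈ l) (hv : v ∈ l) :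
    ReflTransGen (fun a b => (a, b) ∈ cycleArcs l) u v := by
  obtain ⟨i, hi, rfl⟩ := List.getElem_of_mem hu
  obtain ⟨k, hk, rfl⟩ := List.getElem_of_mem hv
  have path : ∀ {i k : ℕ} (hik : i ≤ k) (hk : k < l.length),
      ReflTransGen (fun a b => (a, b) ∈ cycleArcs l) l[i] l[k] :=
    fun hik hk => reflTransGen_mem_mono subset_union_left (reflTransGen_pathArcs hik hk)
  have wrap : (l[l.length - 1], l[0]) ∈ cycleArcs l := Or.inr ⟨_, _,
    by rw [List.getLast?_eq_getElem?, List.getElem?_eq_getElem],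
    by rw [List.head?_eq_getElem?, List.getElem?_eq_getElem], rfl⟩
  exact ((path (by omega) (by omega)).tail wrap).trans (path (Nat.zero_le k) hk)

lemma mem_pathArcs_iterate {f : V → V} {x a b : V} {k : ℕ}
    (h : (a, b) ∈ pathArcs (List.iterate f x k)) :
    ∃ i, i + 1 < k ∧ a = f^[i] x ∧ b = f a := by
  obtain ⟨i, hi, rfl, rfl⟩ := mem_pathArcs_iff.1 h
  rw [List.length_iterate] at hi
  exact ⟨i, hi, by simp, by simp [iterate_succ_apply']⟩

lemma mem_cycleArcs_iterate_minimalPeriod {f : V → V} {x a b : V}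
    (h : (a, b) ∈ cycleArcs (List.iterate f x (minimalPeriod f x))) : b = f a := by
  rcases h with h | ⟨y, z, hy, hz, hyz⟩
  · obtain ⟨_, _, _, hb⟩ := mem_pathArcs_iterate h
    exact hb
  · cases hyz
    have hp : 0 < minimalPeriod f x := by
      by_contra! h0
      simp [Nat.le_zero.1 h0] at hy
    have hlast : minimalPeriod f x - 1 < minimalPeriod f x := by omega
    rw [List.getLast?_eq_getElem?, List.length_iterate, List.getElem?_iterate _ _ _ _ hlast,
      Option.some_inj] at hy
    rw [List.head?_eq_getElem?, List.getElem?_iterate _ _ _ _ hp, Option.some_inj] at hz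
    rw [← hy, ← hz, ← iterate_succ_apply' f, Nat.succ_eq_add_one,
      Nat.sub_add_cancel hp, iterate_minimalPeriod, iterate_zero_apply]

end ArcLists

namespace IsCactus

variable {V : Type*} {W : Set V} {F : Set (V × V)} {r : V}

lemma root_mem (hc : IsCactus W F r) : r ∈ W := by
  induction hc with
  | trunk _ _ _ hhead => exact List.mem_of_mem_head? hhead
  | bud _ _ _ _ _ _ _ _ _ _ _ _ ih => exact Or.inl ih

lemma fst_mem (hc : IsCactus W F r) {a b : V} (ha : (a, b) ∈ F) : a ∈ W := by
  induction hc with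
  | trunk => exact fst_mem_of_mem_pathArcs ha
  | bud _ _ _ _ _ _ _ _ _ _ hw _ ih =>
    rcases ha with (ha | ha) | ha
    · exact Or.inl (ih ha)
    · exact Or.inr (fst_mem_of_mem_cycleArcs ha)
    · cases ha
      exact Or.inl hw

lemma reflTransGen (hc : IsCactus W F r) {v : V} (hv : v ∈ W) :
    ReflTransGen (fun a b => (a, b) ∈ F) r v := by
  induction hc generalizing v with
  | trunk r l _ hhead =>
    obtain ⟨k, hk, rfl⟩ := List.getElem_of_mem hv
    obtain ⟨_, rfl⟩ := List.getElem?_eq_some_iff.1 (List.head?_eq_getElem? ▸ hhead)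
    exact reflTransGen_pathArcs (Nat.zero_le k) hk
  | bud _ _ E l w u _ _ _ _ hw hu ih =>
    have hE : E ⊆ E ∪ cycleArcs l ∪ {(w, u)} := subset_union_left.trans subset_union_left
    have hl : cycleArcs l ⊆ E ∪ cycleArcs l ∪ {(w, u)} :=
      subset_union_right.trans subset_union_left
    have stem : (w, u) ∈ E ∪ cycleArcs l ∪ {(w, u)} := Or.inr rfl
    rcases hv with hv | hv
    · exact reflTransGen_mem_mono hE (ih hv)
    · exact ((reflTransGen_mem_mono hE (ih hw)).tail stem).trans
        (reflTransGen_mem_mono hl (reflTransGen_cycleArcs hu hv))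

/-- The witness is the cactus with its stems deleted. -/
lemma exists_subgraph_inArcs_outArc_unique (hc : IsCactus W F r) :
    ∃ S ⊆ F, (∀ v ∈ W, v ≠ r → ∃ u, (u, v) ∈ S) ∧
      ∀ u v v', (u, v) ∈ S → (u, v') ∈ S → v = v' := by
  induction hc with
  | trunk r l hnd hhead =>
    refine ⟨pathArcs l, subset_rfl, fun v hv hvr => ?_,
      fun _ _ _ => List.Nodup.eq_of_mem_pathArcs hnd⟩
    exact exists_mem_pathArcs_of_ne_head hv fun h => hvr (Option.some_inj.1 (h.symm.trans hhead))
  | bud _ _ E l w u hc hnd _ hdisj _ _ ih =>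
    obtain ⟨S, hSE, hSin, hSout⟩ := ih
    have hSF : S ∪ cycleArcs l ⊆ E ∪ cycleArcs l ∪ {(w, u)} :=
      union_subset (hSE.trans (subset_union_left.trans subset_union_left))
        (subset_union_right.trans subset_union_left)
    refine ⟨S ∪ cycleArcs l, hSF, ?_, ?_⟩
    · rintro v (hv | hv) hvr
      · obtain ⟨x, hx⟩ := hSin v hv hvr
        exact ⟨x, Or.inl hx⟩
      · obtain ⟨x, hx⟩ := exists_mem_cycleArcs hv
        exact ⟨x, Or.inr hx⟩
    · rintro x v v' (h | h) (h' | h')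
      · exact hSout _ _ _ h h'
      · exact absurd (hc.fst_mem (hSE h)) (hdisj _ (fst_mem_of_mem_cycleArcs h'))
      · exact absurd (hc.fst_mem (hSE h')) (hdisj _ (fst_mem_of_mem_cycleArcs h))
      · exact List.Nodup.eq_of_mem_cycleArcs hnd h h'

end IsCactus

structure IsCactusCover {V ι : Type*} (r : ι → V) (E : Set (V × V)) (U : Set V)
    (W : ι → Set V) (F : ι → Set (V × V)) : Prop where
  isCactus : ∀ j, IsCactus (W j) (F j) (r j)
  subset : ∀ j, F j ⊆ E
  disjoint : Pairwise fun j j' => Disjoint (W j) (W j')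
  iUnion_eq : (⋃ j, W j) = U

namespace IsCactusCover

variable {V ι : Type*} {r : ι → V} {E : Set (V × V)} {U : Set V} {W : ι → Set V}
  {F : ι → Set (V × V)}

lemma subset_cover (hcov : IsCactusCover r E U W F) (j : ι) : W j ⊆ U :=
  hcov.iUnion_eq ▸ subset_iUnion W j

lemma root_mem (hcov : IsCactusCover r E U W F) (j : ι) : r j ∈ U :=
  hcov.subset_cover j (hcov.isCactus j).root_mem

lemma exists_mem (hcov : IsCactusCover r E U W F) {v : V} (hv : v ∈ U) : ∃ j, v ∈ W j :=
  mem_iUnion.1 (hcov.iUnion_eq ▸ hv)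

lemma exists_reflTransGen (hcov : IsCactusCover r E U W F) {v : V} (hv : v ∈ U) :
    ∃ j, ReflTransGen (fun a b => (a, b) ∈ E) (r j) v := by
  obtain ⟨j, hj⟩ := hcov.exists_mem hv
  exact ⟨j, reflTransGen_mem_mono (hcov.subset j) ((hcov.isCactus j).reflTransGen hj)⟩

lemma exists_injective_inArcs (hcov : IsCactusCover r E univ W F) :
    ∃ t : {v // v ∉ range r} → V, Injective t ∧ ∀ v, (t v, v.1) ∈ E := by
  choose S hSF hSin hSout using fun j => (hcov.isCactus j).exists_subgraph_inArcs_outArc_unique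
  choose jv hjv using fun v : V => hcov.exists_mem (mem_univ v)
  choose t ht using fun v : {v // v ∉ range r} =>
    hSin (jv v) v (hjv v) fun h => v.2 ⟨jv v, h.symm⟩
  refine ⟨t, fun v₁ v₂ h => ?_, fun v => hcov.subset _ (hSF _ (ht v))⟩
  have h₂ := ht v₂
  rw [← h] at h₂
  have hj : jv v₁ = jv v₂ := by
    by_contra hne
    exact disjoint_left.1 (hcov.disjoint hne) ((hcov.isCactus _).fst_mem (hSF _ (ht v₁)))
      ((hcov.isCactus _).fst_mem (hSF _ h₂))
  exact Subtype.ext (hSout _ _ _ _ (hj ▸ ht v₁) h₂)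

lemma exists_union_bud (hcov : IsCactusCover r E U W F) {l : List V} {w u : V}
    (hnd : l.Nodup) (hne : l ≠ []) (hlU : ∀ v ∈ l, v ∉ U) (hw : w ∈ U) (hu : u ∈ l)
    (hwu : (w, u) ∈ E) (hlE : cycleArcs l ⊆ E) :
    ∃ W' F', IsCactusCover r E (U ∪ {v | v ∈ l}) W' F' := by
  classical
  obtain ⟨j₀, hj₀⟩ := hcov.exists_mem hw
  have hWl : ∀ j, Disjoint (W j) {v | v ∈ l} :=
    fun j => disjoint_right.2 fun v hv hvW => hlU v hv (hcov.subset_cover j hvW)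
  refine ⟨update W j₀ (W j₀ ∪ {v | v ∈ l}),
    update F j₀ (F j₀ ∪ cycleArcs l ∪ {(w, u)}),
    ⟨fun j => ?_, fun j => ?_, pairwise_disjoint_update_union hcov.disjoint hWl j₀,
      by rw [iUnion_update_union, hcov.iUnion_eq]⟩⟩
  · rcases eq_or_ne j j₀ with rfl | hj
    · rw [update_self, update_self]
      exact (hcov.isCactus j).bud _ _ _ _ _ _ hnd hne
        (fun v hv hvW => hlU v hv (hcov.subset_cover j hvW)) hj₀ hu
    · rw [update_of_ne hj, update_of_ne hj]
      exact hcov.isCactus j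
  · rcases eq_or_ne j j₀ with rfl | hj
    · rw [update_self]
      exact union_subset (union_subset (hcov.subset j) hlE) (singleton_subset_iff.2 hwu)
    · rw [update_of_ne hj]
      exact hcov.subset j

/-- Induction on the uncovered set: the first arc leaving the cover on a path from a root is a
stem for the `f`-cycle through its head. -/
theorem exists_univ_of_periodic [Finite V] (hcov : IsCactusCover r E U W F) {f : V → V}
    (hforest : ∀ v ∉ range r, ∃ j, ReflTransGen (fun a b => (a, b) ∈ E) (r j) v)
    (hU : MapsTo f U U) (hper : ∀ x ∉ U, x ∈ periodicPts f)
    (hfE : ∀ x ∉ U, (x, f x) ∈ E) :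
    ∃ W F, IsCactusCover r E univ W F := by
  induction hk : Uᶜ.ncard using Nat.strong_induction_on generalizing U W F with
  | _ k ih =>
  obtain rfl | ⟨v, hv⟩ := (eq_or_ne U univ).imp_right (ne_univ_iff_exists_notMem U).1
  · exact ⟨W, F, hcov⟩
  obtain ⟨j, hj⟩ := hforest v fun ⟨j, hj⟩ => hv (hj ▸ hcov.root_mem j)
  obtain ⟨w, u, hw, hu, hwu⟩ := hj.exists_leaving (hcov.root_mem j) hv
  have hpu := hper u hu
  set l := List.iterate f u (minimalPeriod f u)
  have hlU : ∀ x ∈ l, x ∉ U := by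
    intro x hx hxU
    obtain ⟨n, rfl⟩ := (mem_iterate_minimalPeriod_iff hpu).1 hx
    exact hu (hU.mem_of_iterate_mem hpu hxU)
  have hul : u ∈ l := (mem_iterate_minimalPeriod_iff hpu).2 ⟨0, rfl⟩
  have hlE : cycleArcs l ⊆ E := fun ⟨a, b⟩ hab => by
    rw [mem_cycleArcs_iterate_minimalPeriod hab]
    exact hfE a (hlU a (fst_mem_of_mem_cycleArcs hab))
  obtain ⟨W', F', hcov'⟩ := hcov.exists_union_bud (nodup_iterate_minimalPeriod f u)
    (List.ne_nil_of_mem hul) hlU hw hul hwu hlE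
  have hmaps : MapsTo f {x | x ∈ l} {x | x ∈ l} := by
    intro x hx
    obtain ⟨n, rfl⟩ := (mem_iterate_minimalPeriod_iff hpu).1 hx
    exact (mem_iterate_minimalPeriod_iff hpu).2 ⟨n + 1, iterate_succ_apply' f n u⟩
  have hlt : (U ∪ {x | x ∈ l})ᶜ.ncard < k := by
    rw [← hk]
    refine ncard_lt_ncard ((ssubset_iff_of_subset ?_).2 ⟨u, hu, fun h => h (Or.inr hul)⟩)
    exact compl_subset_compl.2 subset_union_left
  exact ih _ hlt hcov' (hU.union_union hmaps) (fun x hx => hper x fun h => hx (Or.inl h))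
    (fun x hx => hfE x fun h => hx (Or.inl h)) rfl

end IsCactusCover

section Trunks

variable {V ι : Type*} {r : ι → V} {t : {v // v ∉ range r} → V}

variable (t) in
/-- Vertices outside `range t`, the ends of the trunks, are fixed points. -/
noncomputable def next (x : V) : V :=
  ((partialInv t x).map Subtype.val).getD x

lemma next_apply (ht : Injective t) (v : {v // v ∉ range r}) : next t (t v) = v := by
  simp [next, partialInv_left ht]

lemma next_of_notMem_range {x : V} (hx : x ∉ range t) : next t x = x := by
  rw [mem_range] at hx
  simp [next, partialInv, hx]

lemma next_injOn (ht : Injective t) : InjOn (next t) (range t) := by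
  rintro _ ⟨v, rfl⟩ _ ⟨w, rfl⟩ h
  rw [next_apply ht, next_apply ht] at h
  rw [Subtype.ext h]

lemma next_notMem_range_of_mem_range (ht : Injective t) {x : V} (hx : x ∈ range t) :
    next t x ∉ range r := by
  obtain ⟨v, rfl⟩ := hx
  rw [next_apply ht]
  exact v.2

/-- On `range t` the map `next t` is injective and never lands on a root. -/
lemma eq_of_iterate_next_eq (hr : Injective r) (ht : Injective t) {j j' : ι} {a b : ℕ}
    (ha : ∀ i < a, (next t)^[i] (r j) ∈ range t)
    (hb : ∀ i < b, (next t)^[i] (r j') ∈ range t)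
    (h : (next t)^[a] (r j) = (next t)^[b] (r j')) : j = j' ∧ a = b := by
  induction a generalizing b with
  | zero =>
    cases b with
    | zero => exact ⟨hr h, rfl⟩
    | succ b =>
      rw [iterate_succ_apply'] at h
      exact absurd ⟨j, h⟩ (next_notMem_range_of_mem_range ht (hb b b.lt_succ_self))
  | succ a ih =>
    cases b with
    | zero =>
      rw [iterate_succ_apply'] at h
      exact absurd ⟨j', h.symm⟩ (next_notMem_range_of_mem_range ht (ha a a.lt_succ_self))
    | succ b =>
      rw [iterate_succ_apply', iterate_succ_apply'] at h
      obtain ⟨rfl, rfl⟩ := ih (fun i hi => ha i (by omega)) (fun i hi => hb i (by omega))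
        (next_injOn ht (ha a a.lt_succ_self) (hb b b.lt_succ_self) h)
      exact ⟨rfl, rfl⟩

variable (t) in
noncomputable def trunkEnd (j : ι) : ℕ :=
  sInf {k | (next t)^[k] (r j) ∉ range t}

variable (t) in
noncomputable def trunk (j : ι) : List V :=
  List.iterate (next t) (r j) (trunkEnd t j + 1)

variable (t) in
def trunkSet : Set V :=
  ⋃ j, {v | v ∈ trunk t j}

lemma exists_iterate_next_notMem_range [Finite V] (hr : Injective r) (ht : Injective t)
    (j : ι) : ∃ k, (next t)^[k] (r j) ∉ range t := by
  by_contra! h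
  exact not_injective_infinite_finite (fun k => (next t)^[k] (r j))
    fun a b hab => (eq_of_iterate_next_eq hr ht (fun i _ => h i) (fun i _ => h i) hab).2

lemma iterate_next_mem_range_of_lt {j : ι} {i : ℕ} (hi : i < trunkEnd t j) :
    (next t)^[i] (r j) ∈ range t :=
  not_not.1 (Nat.notMem_of_lt_sInf hi)

lemma iterate_next_of_trunkEnd_le [Finite V] (hr : Injective r) (ht : Injective t) {j : ι}
    {k : ℕ} (hk : trunkEnd t j ≤ k) : (next t)^[k] (r j) = (next t)^[trunkEnd t j] (r j) := by
  have hend : (next t)^[trunkEnd t j] (r j) ∉ range t :=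
    Nat.sInf_mem (exists_iterate_next_notMem_range hr ht j)
  obtain ⟨d, rfl⟩ := Nat.exists_eq_add_of_le hk
  rw [add_comm, iterate_add_apply, iterate_fixed (next_of_notMem_range hend)]

lemma eq_of_iterate_next_eq_of_le_trunkEnd (hr : Injective r) (ht : Injective t) {j j' : ι}
    {a b : ℕ} (ha : a ≤ trunkEnd t j) (hb : b ≤ trunkEnd t j')
    (h : (next t)^[a] (r j) = (next t)^[b] (r j')) : j = j' ∧ a = b :=
  eq_of_iterate_next_eq hr ht (fun _ hi => iterate_next_mem_range_of_lt (by omega))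
    (fun _ hi => iterate_next_mem_range_of_lt (by omega)) h

lemma mem_trunk_iff [Finite V] (hr : Injective r) (ht : Injective t) {j : ι} {x : V} :
    x ∈ trunk t j ↔ ∃ k, (next t)^[k] (r j) = x := by
  rw [trunk, List.mem_iterate]
  constructor
  · rintro ⟨k, -, rfl⟩
    exact ⟨k, rfl⟩
  · rintro ⟨k, rfl⟩
    rcases le_or_gt (trunkEnd t j) k with hk | hk
    · exact ⟨_, Nat.lt_succ_self _, iterate_next_of_trunkEnd_le hr ht hk⟩
    · exact ⟨k, by omega, rfl⟩

lemma nodup_trunk (hr : Injective r) (ht : Injective t) (j : ι) : (trunk t j).Nodup := by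
  rw [trunk, ← List.range_map_iterate]
  refine List.Nodup.map_on (fun a ha b hb hab => ?_) List.nodup_range
  rw [List.mem_range] at ha hb
  exact (eq_of_iterate_next_eq_of_le_trunkEnd hr ht (by omega) (by omega) hab).2

lemma pathArcs_trunk_subset {E : Set (V × V)} (ht : Injective t) (htE : ∀ v, (t v, v.1) ∈ E)
    (j : ι) : pathArcs (trunk t j) ⊆ E := by
  rintro ⟨a, b⟩ hab
  obtain ⟨i, hi, rfl, rfl⟩ := mem_pathArcs_iterate hab
  obtain ⟨v, hv⟩ := iterate_next_mem_range_of_lt (t := t) (j := j) (i := i) (by omega)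
  rw [← hv, next_apply ht]
  exact htE v

lemma isCactusCover_trunk {E : Set (V × V)} (hr : Injective r) (ht : Injective t)
    (htE : ∀ v, (t v, v.1) ∈ E) :
    IsCactusCover r E (trunkSet t) (fun j => {v | v ∈ trunk t j})
      (fun j => pathArcs (trunk t j)) where
  isCactus j := .trunk (r j) _ (nodup_trunk hr ht j) rfl
  subset := pathArcs_trunk_subset ht htE
  disjoint j j' hjj' := disjoint_left.2 fun x hx hx' => by
    obtain ⟨a, ha, rfl⟩ := List.mem_iterate.1 hx
    obtain ⟨b, hb, hab⟩ := List.mem_iterate.1 hx'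
    exact hjj' (eq_of_iterate_next_eq_of_le_trunkEnd hr ht (by omega) (by omega) hab).1
  iUnion_eq := rfl

lemma mapsTo_next_trunkSet [Finite V] (hr : Injective r) (ht : Injective t) :
    MapsTo (next t) (trunkSet t) (trunkSet t) := by
  intro x hx
  obtain ⟨j, hj⟩ := mem_iUnion.1 hx
  obtain ⟨k, rfl⟩ := (mem_trunk_iff hr ht).1 hj
  exact mem_iUnion.2 ⟨j, (mem_trunk_iff hr ht).2 ⟨k + 1, iterate_succ_apply' _ _ _⟩⟩

/-- Off the trunks, `t` is an injective self-map of a finite set, hence onto. -/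
lemma exists_apply_eq_of_notMem_trunkSet [Finite V] (hr : Injective r) (ht : Injective t)
    {x : V} (hx : x ∉ trunkSet t) : ∃ v, v.1 ∉ trunkSet t ∧ t v = x := by
  have hroot : ∀ y ∉ trunkSet t, y ∉ range r := by
    rintro y hy ⟨j, rfl⟩
    exact hy (mem_iUnion.2 ⟨j, (mem_trunk_iff hr ht).2 ⟨0, rfl⟩⟩)
  have hmaps : ∀ y : ↥(trunkSet t)ᶜ, t ⟨y, hroot y y.2⟩ ∉ trunkSet t := by
    intro y hy
    obtain ⟨j, hj⟩ := mem_iUnion.1 hy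
    obtain ⟨k, hk⟩ := (mem_trunk_iff hr ht).1 hj
    refine y.2 (mem_iUnion.2 ⟨j, (mem_trunk_iff hr ht).2 ⟨k + 1, ?_⟩⟩)
    rw [iterate_succ_apply', hk, next_apply ht]
  let g : ↥(trunkSet t)ᶜ → ↥(trunkSet t)ᶜ := fun y => ⟨_, hmaps y⟩
  have hg : Injective g := fun y z h => by
    have hyz := ht (congrArg Subtype.val h)
    rw [Subtype.mk.injEq] at hyz
    exact Subtype.ext hyz
  obtain ⟨y, hy⟩ := Finite.injective_iff_surjective.1 hg ⟨x, hx⟩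
  exact ⟨⟨y, hroot y y.2⟩, y.2, congrArg Subtype.val hy⟩

theorem exists_isCactusCover_univ_of_injective [Finite V] {E : Set (V × V)} (hr : Injective r)
    (ht : Injective t) (htE : ∀ v, (t v, v.1) ∈ E)
    (hforest : ∀ v ∉ range r, ∃ j, ReflTransGen (fun a b => (a, b) ∈ E) (r j) v) :
    ∃ W F, IsCactusCover r E univ W F := by
  have hpre := fun x (hx : x ∉ trunkSet t) => exists_apply_eq_of_notMem_trunkSet hr ht hx
  have hmaps : MapsTo (next t) (trunkSet t)ᶜ (trunkSet t)ᶜ := by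
    intro x hx
    obtain ⟨v, hv, rfl⟩ := hpre x hx
    rwa [next_apply ht]
  have hinj : InjOn (next t) (trunkSet t)ᶜ :=
    (next_injOn ht).mono fun x hx => (hpre x hx).imp fun _ => And.right
  refine (isCactusCover_trunk hr ht htE).exists_univ_of_periodic hforest
    (mapsTo_next_trunkSet hr ht) (fun x hx => mem_periodicPts_of_mapsTo_of_injOn hmaps hinj hx)
    fun x hx => ?_
  obtain ⟨v, -, rfl⟩ := hpre x hx
  rw [next_apply ht]
  exact htE v

end Trunks

theorem stmt12_general (n m : ℕ)
    (E : Set (Fin (n + m) × Fin (n + m))) (r : Fin m → Fin (n + m))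
    (hr : Function.Injective r) :
    (∃ (W : Fin m → Set (Fin (n + m))) (F : Fin m → Set (Fin (n + m) × Fin (n + m))),
        (∀ j, IsCactus (W j) (F j) (r j)) ∧ (∀ j, F j ⊆ E) ∧
        Pairwise (fun j j' => Disjoint (W j) (W j')) ∧ (⋃ j, W j) = Set.univ) ↔
      ((∀ v : Fin (n + m), (¬ ∃ j : Fin m, r j = v) →
          ∃ j : Fin m, Relation.ReflTransGen (fun a b => (a, b) ∈ E) (r j) v) ∧
        ∃ t : {v : Fin (n + m) // ¬ ∃ j : Fin m, r j = v} → Fin (n + m),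
          Function.Injective t ∧ ∀ v, (t v, v.1) ∈ E) := by
  constructor
  · rintro ⟨W, F, hcactus, hsub, hdisj, hcover⟩
    have hcov : IsCactusCover r E univ W F := ⟨hcactus, hsub, hdisj, hcover⟩
    exact ⟨fun v _ => hcov.exists_reflTransGen (mem_univ v), hcov.exists_injective_inArcs⟩
  · rintro ⟨hforest, t, ht, htE⟩
    obtain ⟨W, F, hcov⟩ := exists_isCactusCover_univ_of_injective hr ht htE hforest
    exact ⟨W, F, hcov.isCactus, hcov.subset, hcov.disjoint, hcov.iUnion_eq⟩

/-- A directed graph on `n + m` vertices has a spanning subgraph which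
is a disjoint union of `m` cactus graphs rooted at the `m` distinct vertices `r 0, …,
r (m-1)` iff it has a spanning forest rooted at these vertices and a spanning subgraph
which is a disjoint union of `m` directed path graphs and a non-negative number of
directed cycle graphs whose path sources are exactly these vertices (encoded by the choice
`t v` of the unique incoming arc of each vertex `v` outside the roots, with `t` injective
so that no two chosen arcs share a start vertex). -/
theorem stmt12 (n m : ℕ) (hn : 1 ≤ n) (hm : 1 ≤ m)
    (E : Set (Fin (n + m) × Fin (n + m))) (r : Fin m → Fin (n + m))
    (hr : Function.Injective r) :
    (∃ (W : Fin m → Set (Fin (n + m))) (F : Fin m → Set (Fin (n + m) × Fin (n + m))),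
        (∀ j, IsCactus (W j) (F j) (r j)) ∧ (∀ j, F j ⊆ E) ∧
        Pairwise (fun j j' => Disjoint (W j) (W j')) ∧ (⋃ j, W j) = Set.univ) ↔
      ((∀ v : Fin (n + m), (¬ ∃ j : Fin m, r j = v) →
          ∃ j : Fin m, Relation.ReflTransGen (fun a b => (a, b) ∈ E) (r j) v) ∧
        ∃ t : {v : Fin (n + m) // ¬ ∃ j : Fin m, r j = v} → Fin (n + m),
          Function.Injective t ∧ ∀ v, (t v, v.1) ∈ E) :=
  stmt12_general n m E r hr

end StructCtrl
end
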